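/- Let τ be an even state on ℂ^N with correlation matrix M. Then Λ(τ⊗τ)Λ is positive semidefinite and ‖Λ(τ⊗τ)Λ‖₁ = 2m − Tr(Mᵀ M). -/

import Mathlib

open Matrix Kronecker Finset
open scoped ComplexOrder

noncomputable section

/-- A Majorana family: `2*m` Hermitian `2^m × 2^m` complex matrices squaring to the
identity and pairwise anticommuting. -/
structure MajoranaFamily (m : ℕ) where
  c : Fin (2*m) → Matrix (Fin (2^m)) (Fin (2^m)) ℂ
  herm : ∀ j, (c j).IsHermitian
  sq : ∀ j, c j * c j = 1
  anticomm : ∀ j k, j ≠ k → c j * c k = -(c k * c j)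

abbrev Mat (m : ℕ) := Matrix (Fin (2^m)) (Fin (2^m)) ℂ
abbrev Mat2 (m : ℕ) := Matrix (Fin (2^m) × Fin (2^m)) (Fin (2^m) × Fin (2^m)) ℂ
abbrev MatN (m n : ℕ) := Matrix (Fin n → Fin (2^m)) (Fin n → Fin (2^m)) ℂ

variable {m : ℕ}

/-- A state: a positive semidefinite matrix of trace `1`. -/
def IsState {ι : Type*} [Fintype ι] (ρ : Matrix ι ι ℂ) : Prop :=
  ρ.PosSemidef ∧ ρ.trace = 1

/-- The positive semidefinite square root of a positive semidefinite matrix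
(the former `Matrix.PosSemidef.sqrt`, removed from Mathlib). -/
def psdSqrtOld {ι : Type*} [Fintype ι] [DecidableEq ι] {A : Matrix ι ι ℂ}
    (hA : A.PosSemidef) : Matrix ι ι ℂ :=
  hA.1.eigenvectorUnitary.1 * diagonal ((↑) ∘ (√·) ∘ hA.1.eigenvalues) *
    (star hA.1.eigenvectorUnitary : Matrix ι ι ℂ)

/-- The trace norm `‖X‖₁ = Tr √(XᴴX)`. -/
def traceNorm {ι : Type*} [Fintype ι] [DecidableEq ι] (X : Matrix ι ι ℂ) : ℝ :=
  ((psdSqrtOld (Matrix.posSemidef_conjTranspose_mul_self X)).trace).re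

/-- The rotated Majorana operators `c̃_j = Σ_i R_{ij} c_i`. -/
def tilde (F : MajoranaFamily m) (R : Matrix (Fin (2*m)) (Fin (2*m)) ℝ)
    (j : Fin (2*m)) : Mat m :=
  ∑ i, (R i j : ℂ) • F.c i

/-- Standard-form Gaussian state `2^{-m} ∏_{k=1}^m (I + i λ_k c̃_{2k-1} c̃_{2k})`
(ordered product; the factors commute). -/
def gaussStd (F : MajoranaFamily m) (R : Matrix (Fin (2*m)) (Fin (2*m)) ℝ)
    (lam : Fin m → ℝ) : Mat m :=
  ((2:ℂ)^m)⁻¹ • (List.ofFn (fun k : Fin m =>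
    (1 : Mat m) + (Complex.I * (lam k : ℂ)) •
      (tilde F R ⟨2*k.val, by omega⟩ * tilde F R ⟨2*k.val+1, by omega⟩))).prod

/-- A pure Gaussian state: a standard-form Gaussian state with all `λ_k ∈ {-1,1}`,
for some `R ∈ SO(2m,ℝ)`. -/
def IsPureGaussian (F : MajoranaFamily m) (ρ : Mat m) : Prop :=
  ∃ (R : Matrix (Fin (2*m)) (Fin (2*m)) ℝ) (lam : Fin m → ℝ),
    Rᵀ * R = 1 ∧ R.det = 1 ∧ (∀ k, lam k = 1 ∨ lam k = -1) ∧ ρ = gaussStd F R lam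

/-- A convex-Gaussian state: a finite convex combination of pure Gaussian states. -/
def IsConvexGaussian (F : MajoranaFamily m) (ρ : Mat m) : Prop :=
  ∃ (k : ℕ) (p : Fin k → ℝ) (g : Fin k → Mat m),
    (∀ i, 0 ≤ p i) ∧ (∑ i, p i) = 1 ∧ (∀ i, IsPureGaussian F (g i)) ∧
    ρ = ∑ i, p i • g i

/-- `Λ = Σ_j c_j ⊗ c_j` on `ℂ^N ⊗ ℂ^N`. -/
def Lambda (F : MajoranaFamily m) : Mat2 m := ∑ j, F.c j ⊗ₖ F.c j

/-- Ordered product `c_{a_1} ⋯ c_{a_r}` over a finite set `S = {a_1 < … < a_r}`. -/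
def majProd (F : MajoranaFamily m) (S : Finset (Fin (2*m))) : Mat m :=
  ((S.sort (· ≤ ·)).map F.c).prod

/-- An even operator: a complex linear combination of the identity and products of
an even number of distinct Majorana operators. -/
def IsEven (F : MajoranaFamily m) (X : Mat m) : Prop :=
  X ∈ Submodule.span ℂ {Y : Mat m | ∃ S : Finset (Fin (2*m)), Even S.card ∧ Y = majProd F S}

/-- The Hermitian correlator `i^k c_{a_1} ⋯ c_{a_{2k}}` associated to a set of
cardinality `2k`. -/
def corrOp (F : MajoranaFamily m) (S : Finset (Fin (2*m))) : Mat m :=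
  (Complex.I ^ (S.card / 2)) • majProd F S

/-- The operator acting as `A` on the `k`-th tensor factor of `(ℂ^N)^{⊗n}` and as the
identity on the other factors. -/
def embedAt (n : ℕ) (k : Fin n) (A : Mat m) : MatN m n :=
  fun x y => A (x k) (y k) * ∏ l ∈ Finset.univ.erase k, (if x l = y l then 1 else 0)

/-- `Λ^{k,l} = Σ_j c_j^{(k)} c_j^{(l)}` on `(ℂ^N)^{⊗n}`. -/
def LambdaKL (F : MajoranaFamily m) (n : ℕ) (k l : Fin n) : MatN m n :=
  ∑ j, embedAt n k (F.c j) * embedAt n l (F.c j)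

/-- Partial trace of an operator on `(ℂ^N)^{⊗n}` over the tensor factors `2, …, n`. -/
def ptrRest (n : ℕ) (hn : 1 ≤ n) (ρ : MatN m n) : Mat m := fun a b =>
  ∑ g : Fin (n-1) → Fin (2^m),
    ρ (fun i => if h : i.val = 0 then a else g ⟨i.val - 1, by omega⟩)
      (fun i => if h : i.val = 0 then b else g ⟨i.val - 1, by omega⟩)

/-- `ρ` has an `n`-Gaussian-symmetric extension. -/
def HasGSExt (F : MajoranaFamily m) (n : ℕ) (hn : 1 ≤ n) (ρ : Mat m) : Prop :=
  ∃ ext : MatN m n, IsState ext ∧ ptrRest n hn ext = ρ ∧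
    ∀ k l : Fin n, k ≠ l → LambdaKL F n k l * ext = 0

/-- `‖Λ‖₁ = 2(m+1) C(2m, m+1)`. -/
def lambdaNorm (m : ℕ) : ℝ := 2*(m+1) * (Nat.choose (2*m) (m+1) : ℝ)

/-- `ε(n) = min {2, 10 ‖Λ‖₁² 2^{2m} n^{-1/3}}`. -/
def epsB (m n : ℕ) : ℝ :=
  min 2 (10 * lambdaNorm m ^ 2 * 2^(2*m) / (n:ℝ) ^ ((1:ℝ)/3))

/-- `χ(n) = (ε(n)/2) (2m)!/m!`. -/
def chiB (m n : ℕ) : ℝ :=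
  epsB m n / 2 * ((Nat.factorial (2*m) : ℝ) / (Nat.factorial m : ℝ))

/-- `δ(n) = χ(n)/(1+χ(n))`. -/
def deltaB (m n : ℕ) : ℝ := chiB m n / (1 + chiB m n)

/-- The parity operator `P = i^m c_1 ⋯ c_{2m}`. -/
def parityOp (F : MajoranaFamily m) : Mat m :=
  (Complex.I ^ m) • (((List.finRange (2*m)).map F.c).prod)

/-- The operator `I^{⊗ r} ⊗ c_s ⊗ P^{⊗(n-r-1)}` on `(ℂ^N)^{⊗n}` (0-based position `r`). -/
def dOp (F : MajoranaFamily m) (n : ℕ) (r : Fin n) (s : Fin (2*m)) : MatN m n :=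
  fun x y => ∏ l : Fin n,
    if l < r then (if x l = y l then 1 else 0)
    else if l = r then F.c s (x l) (y l)
    else parityOp F (x l) (y l)

/-- The family `d_1, …, d_{2mn}`, where `d_{2m(r-1)+s} = I^{⊗(r-1)} ⊗ c_s ⊗ P^{⊗(n-r)}`. -/
def dAll (hm : 1 ≤ m) (F : MajoranaFamily m) (n : ℕ) (j : Fin (2*(m*n))) : MatN m n :=
  dOp F n
    ⟨j.val / (2*m), by
      have h1 := j.isLt
      rw [Nat.div_lt_iff_lt_mul (by omega)]
      have h2 : n * (2*m) = 2*(m*n) := by ring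
      omega⟩
    ⟨j.val % (2*m), Nat.mod_lt _ (by omega)⟩

/-- The index `2m(k-1)+j` (0-based: `2mk + j`) into a family of `2mn` Majorana operators. -/
def bigIdx (m n : ℕ) (k : Fin n) (j : Fin (2*m)) : Fin (2*(m*n)) :=
  ⟨2*m*k.val + j.val, by
    have hk : k.val + 1 ≤ n := k.isLt
    have hj := j.isLt
    have h1 : 2*m*(k.val+1) = 2*m*k.val + 2*m := by ring
    have h2 : 2*m*(k.val+1) ≤ 2*m*n := Nat.mul_le_mul le_rfl hk
    have h3 : 2*m*n = 2*(m*n) := by ring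
    omega⟩

/-- `Γ^{k,l} = Σ_{j=1}^{2m} (-1)^{m-j} e_{2m(k-1)+j} · e_{2m(l-1)+1} ⋯ ê_{2m(l-1)+j} ⋯ e_{2ml}`. -/
def GammaKL (m n : ℕ) (E : MajoranaFamily (m*n)) (k l : Fin n) :
    Matrix (Fin (2^(m*n))) (Fin (2^(m*n))) ℂ :=
  ∑ j : Fin (2*m), ((-1:ℂ) ^ ((m:ℤ) - (j.val+1 : ℤ))) •
    (E.c (bigIdx m n k j) *
      (((List.finRange (2*m)).filter (fun i => i ≠ j)).map
        (fun i => E.c (bigIdx m n l i))).prod)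

/-- `C = i^{mn} e_1 ⋯ e_{2mn}`. -/
def bigParity (m n : ℕ) (E : MajoranaFamily (m*n)) :
    Matrix (Fin (2^(m*n))) (Fin (2^(m*n))) ℂ :=
  (Complex.I ^ (m*n)) • (((List.finRange (2*(m*n))).map E.c).prod)

/-- The `n`-fold tensor power `A^{⊗n}` of a matrix on `ℂ^N`. -/
def tpow (n : ℕ) (A : Mat m) : MatN m n := fun x y => ∏ k, A (x k) (y k)

/-! Since `Λ` is Hermitian, `Λ (τ ⊗ τ) Λ = Λᴴ (τ ⊗ τ) Λ` is positive semidefinite, so its trace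
norm is its trace. Cycling the trace, `Tr (Λ (τ ⊗ τ) Λ) = Σ_{j,k} Tr (τ c_j c_k)²`, and
`Tr (τ c_j c_k)` is `1` for `j = k` and `-i M_{jk}` otherwise, by anticommutation. -/

open scoped MatrixOrder in
theorem psdSqrtOld_conjTranspose_mul_self {ι : Type*} [Fintype ι] [DecidableEq ι]
    {X : Matrix ι ι ℂ} (hX : X.PosSemidef) :
    psdSqrtOld (posSemidef_conjTranspose_mul_self X) = X := by
  have hXX : Xᴴ * X = X * X := by rw [hX.1.eq]
  have hcfc : psdSqrtOld (posSemidef_conjTranspose_mul_self X)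
      = (posSemidef_conjTranspose_mul_self X).1.cfc Real.sqrt := by
    simp [psdSqrtOld, IsHermitian.cfc, Function.comp_def]
  rw [hcfc, ← IsHermitian.cfc_eq, hXX, ← cfcₙ_eq_cfc,
    ← CFC.sqrt_eq_real_sqrt _ (by rw [← hXX]; exact (posSemidef_conjTranspose_mul_self X).nonneg),
    CFC.sqrt_mul_self X hX.nonneg]

theorem traceNorm_of_posSemidef {ι : Type*} [Fintype ι] [DecidableEq ι]
    {X : Matrix ι ι ℂ} (hX : X.PosSemidef) : traceNorm X = X.trace.re := by
  rw [traceNorm, psdSqrtOld_conjTranspose_mul_self hX]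

theorem trace_transpose_mul_self_eq_sum_sq {n : Type*} [Fintype n] (M : Matrix n n ℝ) :
    (Mᵀ * M).trace = ∑ j, ∑ k, M j k ^ 2 := by
  simp only [trace, diag_apply, mul_apply, transpose_apply]
  rw [Finset.sum_comm]
  simp only [sq]

namespace MajoranaFamily

variable (F : MajoranaFamily m)

theorem lambda_isHermitian : (Lambda F).IsHermitian := by
  simp only [IsHermitian, Lambda, conjTranspose_sum, conjTranspose_kronecker, (F.herm _).eq]

theorem lambda_mul_lambda :
    Lambda F * Lambda F = ∑ j, ∑ k, (F.c j * F.c k) ⊗ₖ (F.c j * F.c k) := by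
  simp only [Lambda, Finset.sum_mul_sum, mul_kronecker_mul]

theorem trace_lambda_mul_kronecker_mul_lambda (A B : Mat m) :
    (Lambda F * (A ⊗ₖ B) * Lambda F).trace
      = ∑ j, ∑ k, (A * (F.c j * F.c k)).trace * (B * (F.c j * F.c k)).trace := by
  rw [trace_mul_cycle, trace_mul_comm, lambda_mul_lambda]
  simp only [Matrix.mul_sum, trace_sum, ← mul_kronecker_mul, trace_kronecker]

section Correlations

variable {F} {τ : Mat m} {M : Matrix (Fin (2*m)) (Fin (2*m)) ℝ}
  (hM : ∀ j k, (M j k : ℂ) = Complex.I / 2 * (τ * (F.c j * F.c k - F.c k * F.c j)).trace)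
include hM

theorem correlation_diag_eq_zero (j : Fin (2*m)) : M j j = 0 := by
  simpa using hM j j

theorem trace_mul_c_mul_c_of_ne {j k : Fin (2*m)} (hjk : j ≠ k) :
    (τ * (F.c j * F.c k)).trace = -(Complex.I * M j k) := by
  have h := hM j k
  rw [F.anticomm k j hjk.symm, sub_neg_eq_add, Matrix.mul_add, trace_add] at h
  linear_combination Complex.I * h + (τ * (F.c j * F.c k)).trace * Complex.I_sq

theorem trace_mul_c_mul_c_mul_self (hτ : τ.trace = 1) (j k : Fin (2*m)) :
    (τ * (F.c j * F.c k)).trace * (τ * (F.c j * F.c k)).trace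
      = (if j = k then 1 else 0) - (M j k : ℂ) ^ 2 := by
  by_cases hjk : j = k
  · subst hjk
    simp [F.sq, hτ, correlation_diag_eq_zero hM]
  · rw [trace_mul_c_mul_c_of_ne hM hjk, if_neg hjk]
    linear_combination (M j k : ℂ) ^ 2 * Complex.I_sq

end Correlations

end MajoranaFamily

theorem stmt_10_general (m : ℕ) (F : MajoranaFamily m) (τ : Mat m)
    (hτ : IsState τ)
    (M : Matrix (Fin (2*m)) (Fin (2*m)) ℝ)
    (hM : ∀ j k, (M j k : ℂ) =
      Complex.I / 2 * (τ * (F.c j * F.c k - F.c k * F.c j)).trace) :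
    (Lambda F * (τ ⊗ₖ τ) * Lambda F).PosSemidef ∧
      traceNorm (Lambda F * (τ ⊗ₖ τ) * Lambda F) = 2*m - (Mᵀ * M).trace := by
  have hPSD : (Lambda F * (τ ⊗ₖ τ) * Lambda F).PosSemidef := by
    simpa only [F.lambda_isHermitian.eq] using
      (hτ.1.kronecker hτ.1).conjTranspose_mul_mul_same (Lambda F)
  have htrace : (Lambda F * (τ ⊗ₖ τ) * Lambda F).trace = 2*m - ∑ j, ∑ k, (M j k : ℂ) ^ 2 := by
    simp [F.trace_lambda_mul_kronecker_mul_lambda, MajoranaFamily.trace_mul_c_mul_c_mul_self hM hτ.2,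
      Finset.sum_sub_distrib]
  refine ⟨hPSD, ?_⟩
  rw [traceNorm_of_posSemidef hPSD, htrace, trace_transpose_mul_self_eq_sum_sq]
  norm_cast

/-- For an even state `τ` with correlation matrix `M`, the operator `Λ (τ ⊗ τ) Λ` is
positive semidefinite and `‖Λ (τ ⊗ τ) Λ‖₁ = 2m - Tr(Mᵀ M)`. -/
theorem stmt_10 (m : ℕ) (hm : 1 ≤ m) (F : MajoranaFamily m) (τ : Mat m)
    (hτ : IsState τ) (hev : IsEven F τ)
    (M : Matrix (Fin (2*m)) (Fin (2*m)) ℝ)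
    (hM : ∀ j k, (M j k : ℂ) =
      Complex.I / 2 * (τ * (F.c j * F.c k - F.c k * F.c j)).trace) :
    (Lambda F * (τ ⊗ₖ τ) * Lambda F).PosSemidef ∧
      traceNorm (Lambda F * (τ ⊗ₖ τ) * Lambda F) = 2*m - (Mᵀ * M).trace :=
  stmt_10_general m F τ hτ M hM
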